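/- Under assumptions (i)–(iii), suppose additionally that ‖a − b‖ ≤ C0 for all a, b ∈ S. Then for every s*, s' ∈ S and every integer N ≥ 1 such that the convex combination s̃ := ((N−1)/N) · s* + (1/N) · s' lies in S, one has ‖Q_{s̃} − Q_{s*}‖∞ ≤ C_MF / N, where C_MF = C0 · ((1 − α) L_r + α R_max |X| L_p) / (1 − α)². -/

import Mathlib

/-!
Two fixed points `Q = T Q` and `Q' = T' Q'` of Bellman operators with the same discount `α` satisfy
`‖Q - Q'‖ ≤ ‖T Q' - T' Q'‖ / (1 - α)`, because `T` is an `α`-contraction. The defect `T Q' - T' Q'`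
is controlled by the Lipschitz constants of `r` and `p` together with the a priori bound
`‖Q'‖ ≤ R_max / (1 - α)`, and the perturbed parameter is at distance `‖s' - s*‖ / N ≤ C0 / N`
from `s*`.
-/

open Finset

/-- The Bellman optimality operator
`(T Q)(x,a) = r(x,a) + α * Σ_{x'} p(x'|x,a) * max_{a'} Q(x',a')`. -/
noncomputable def bellmanOp {X A : Type*} [Fintype X] [Fintype A] [Nonempty A]
    (r : X × A → ℝ) (p : X × A → X → ℝ) (α : ℝ) (Q : X × A → ℝ) : X × A → ℝ :=
  fun xa => r xa + α * ∑ x' : X, p xa x' *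
    Finset.univ.sup' Finset.univ_nonempty (fun a' : A => Q (x', a'))

/-- The sup norm `‖Q‖∞ = max_{(x,a)} |Q(x,a)|`. -/
noncomputable def supNorm {X A : Type*} [Fintype X] [Fintype A] [Nonempty X] [Nonempty A]
    (Q : X × A → ℝ) : ℝ :=
  Finset.univ.sup' Finset.univ_nonempty (fun xa : X × A => |Q xa|)

theorem Finset.abs_sup'_sub_sup'_le {ι α : Type*} [AddCommGroup α] [LinearOrder α]
    [IsOrderedAddMonoid α] {s : Finset ι} (hs : s.Nonempty) {f g : ι → α} {c : α}
    (h : ∀ i ∈ s, |f i - g i| ≤ c) : |s.sup' hs f - s.sup' hs g| ≤ c := by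
  have key : ∀ f g : ι → α, (∀ i ∈ s, f i - g i ≤ c) → s.sup' hs f - s.sup' hs g ≤ c := by
    intro f g hfg
    rw [sub_le_iff_le_add, sup'_le_iff]
    intro i hi
    calc f i ≤ c + g i := sub_le_iff_le_add.1 (hfg i hi)
      _ ≤ c + s.sup' hs g := add_le_add_right (le_sup' g hi) c
  rw [abs_sub_le_iff]
  exact ⟨key f g fun i hi => (abs_sub_le_iff.1 (h i hi)).1,
    key g f fun i hi => (abs_sub_le_iff.1 (h i hi)).2⟩

section WeightedSums

variable {X : Type*} [Fintype X]

theorem abs_sum_mul_le_norm {p v : X → ℝ} (hp0 : ∀ x, 0 ≤ p x) (hp1 : ∑ x, p x = 1) :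
    |∑ x, p x * v x| ≤ ‖v‖ :=
  calc |∑ x, p x * v x| ≤ ∑ x, p x * ‖v‖ := by
        refine (abs_sum_le_sum_abs _ _).trans (sum_le_sum fun x _ => ?_)
        rw [abs_mul, abs_of_nonneg (hp0 x), ← Real.norm_eq_abs]
        exact mul_le_mul_of_nonneg_left (norm_le_pi_norm v x) (hp0 x)
    _ = ‖v‖ := by rw [← sum_mul, hp1, one_mul]

theorem abs_sum_sub_mul_le {p q v : X → ℝ} {δ : ℝ} (h : ∀ x, |p x - q x| ≤ δ) :
    |∑ x, (p x - q x) * v x| ≤ Fintype.card X * δ * ‖v‖ :=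
  calc |∑ x, (p x - q x) * v x| ≤ ∑ _x : X, δ * ‖v‖ := by
        refine (abs_sum_le_sum_abs _ _).trans (sum_le_sum fun x _ => ?_)
        rw [abs_mul, ← Real.norm_eq_abs (v x)]
        exact mul_le_mul (h x) (norm_le_pi_norm v x) (norm_nonneg _) ((abs_nonneg _).trans (h x))
    _ = Fintype.card X * δ * ‖v‖ := by rw [sum_const, card_univ, nsmul_eq_mul, mul_assoc]

end WeightedSums

section Bellman

variable {X A : Type*} [Fintype X] [Fintype A] [Nonempty A]

noncomputable def stateValue (Q : X × A → ℝ) (x : X) : ℝ :=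
  univ.sup' univ_nonempty fun a => Q (x, a)

theorem bellmanOp_apply (r : X × A → ℝ) (p : X × A → X → ℝ) (α : ℝ) (Q : X × A → ℝ)
    (xa : X × A) :
    bellmanOp r p α Q xa = r xa + α * ∑ x', p xa x' * stateValue Q x' :=
  rfl

theorem norm_stateValue_sub_le (Q Q' : X × A → ℝ) :
    ‖stateValue Q - stateValue Q'‖ ≤ ‖Q - Q'‖ :=
  (pi_norm_le_iff_of_nonneg (norm_nonneg _)).2 fun x => by
    rw [Pi.sub_apply, Real.norm_eq_abs]
    exact abs_sup'_sub_sup'_le _ fun a _ => norm_le_pi_norm (Q - Q') (x, a)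

theorem norm_stateValue_le (Q : X × A → ℝ) : ‖stateValue Q‖ ≤ ‖Q‖ := by
  have hzero : stateValue (0 : X × A → ℝ) = 0 := funext fun _ => sup'_const _ _
  simpa [hzero] using norm_stateValue_sub_le Q 0

variable [Nonempty X] {r r' : X × A → ℝ} {p p' : X × A → X → ℝ} {α : ℝ} {Q Q' : X × A → ℝ}

theorem norm_le_of_bellmanOp_eq (hα0 : 0 ≤ α) (hα1 : α < 1)
    (hp0 : ∀ xa x', 0 ≤ p xa x') (hp1 : ∀ xa, ∑ x', p xa x' = 1)
    {R : ℝ} (hr : ∀ xa, |r xa| ≤ R) (hQ : bellmanOp r p α Q = Q) :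
    ‖Q‖ ≤ R / (1 - α) := by
  have hpoint : ∀ xa, ‖Q xa‖ ≤ R + α * ‖Q‖ := fun xa => by
    rw [Real.norm_eq_abs, ← congrFun hQ xa, bellmanOp_apply]
    refine (abs_add_le _ _).trans ?_
    rw [abs_mul, abs_of_nonneg hα0]
    gcongr
    · exact hr xa
    · exact (abs_sum_mul_le_norm (hp0 xa) (hp1 xa)).trans (norm_stateValue_le Q)
  have hQ_le : ‖Q‖ ≤ R + α * ‖Q‖ := (pi_norm_le_iff_of_nonempty _).2 hpoint
  rw [le_div_iff₀ (sub_pos.2 hα1)]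
  linarith

theorem norm_sub_le_of_bellmanOp_eq (hα0 : 0 ≤ α) (hα1 : α < 1)
    (hp0 : ∀ xa x', 0 ≤ p xa x') (hp1 : ∀ xa, ∑ x', p xa x' = 1)
    {εr εp : ℝ} (hr : ∀ xa, |r xa - r' xa| ≤ εr) (hp : ∀ xa x', |p xa x' - p' xa x'| ≤ εp)
    (hQ : bellmanOp r p α Q = Q) (hQ' : bellmanOp r' p' α Q' = Q') :
    ‖Q - Q'‖ ≤ (εr + α * (Fintype.card X * εp * ‖Q'‖)) / (1 - α) := by
  have hpoint : ∀ xa, ‖(Q - Q') xa‖ ≤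
      εr + α * (‖Q - Q'‖ + Fintype.card X * εp * ‖Q'‖) := fun xa => by
    have hsplit : Q xa - Q' xa = (r xa - r' xa) +
        α * (∑ x', p xa x' * (stateValue Q x' - stateValue Q' x') +
          ∑ x', (p xa x' - p' xa x') * stateValue Q' x') := by
      rw [← congrFun hQ xa, ← congrFun hQ' xa, bellmanOp_apply, bellmanOp_apply]
      simp only [mul_sub, sub_mul, sum_sub_distrib]
      ring
    rw [Pi.sub_apply, Real.norm_eq_abs, hsplit]
    refine (abs_add_le _ _).trans ?_
    rw [abs_mul, abs_of_nonneg hα0]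
    gcongr
    · exact hr xa
    have hεp : 0 ≤ εp := (abs_nonneg _).trans (hp xa (Classical.arbitrary X))
    refine (abs_add_le _ _).trans (add_le_add ?_ ((abs_sum_sub_mul_le (hp xa)).trans ?_))
    · exact (abs_sum_mul_le_norm (hp0 xa) (hp1 xa)).trans (norm_stateValue_sub_le Q Q')
    · gcongr
      exact norm_stateValue_le Q'
  have hQ_le : ‖Q - Q'‖ ≤ εr + α * (‖Q - Q'‖ + Fintype.card X * εp * ‖Q'‖) :=
    (pi_norm_le_iff_of_nonempty _).2 hpoint
  rw [le_div_iff₀ (sub_pos.2 hα1)]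
  linarith

theorem supNorm_eq_norm (Q : X × A → ℝ) : supNorm Q = ‖Q‖ :=
  le_antisymm (sup'_le _ _ fun xa _ => norm_le_pi_norm Q xa)
    ((pi_norm_le_iff_of_nonneg ((abs_nonneg _).trans
      (le_sup' (fun xa => |Q xa|) (mem_univ (Classical.arbitrary _))))).2
      fun xa => le_sup' (fun xa => |Q xa|) (mem_univ xa))

end Bellman

theorem norm_smul_add_smul_sub_left {E : Type*} [NormedAddCommGroup E] [NormedSpace ℝ E]
    (a b : E) {N : ℝ} (hN : 0 < N) :
    ‖((N - 1) / N) • a + (1 / N) • b - a‖ = ‖b - a‖ / N := by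
  have hcomb : ((N - 1) / N) • a + (1 / N) • b - a = (1 / N) • (b - a) := by
    match_scalars
    · field_simp
      ring
    · ring
  rw [hcomb, norm_smul, Real.norm_of_nonneg (by positivity), one_div_mul_eq_div]

theorem mean_field_perturbation_q_bound_general
    {X A : Type*} [Fintype X] [Fintype A] [Nonempty X] [Nonempty A]
    {E : Type*} [NormedAddCommGroup E] [NormedSpace ℝ E]
    (S : Set E)
    (α : ℝ) (hα0 : 0 ≤ α) (hα1 : α < 1)
    (r : E → X × A → ℝ) (p : E → X × A → X → ℝ)
    (hp0 : ∀ s ∈ S, ∀ xa x', 0 ≤ p s xa x')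
    (hp1 : ∀ s ∈ S, ∀ xa, ∑ x' : X, p s xa x' = 1)
    (Rmax : ℝ) (hRmax : 0 ≤ Rmax)
    (hR : ∀ s ∈ S, ∀ xa : X × A, |r s xa| ≤ Rmax)
    (Lr : ℝ) (hLr0 : 0 ≤ Lr)
    (hLr : ∀ s ∈ S, ∀ s' ∈ S, ∀ xa : X × A, |r s xa - r s' xa| ≤ Lr * ‖s - s'‖)
    (Lp : ℝ) (hLp0 : 0 ≤ Lp)
    (hLp : ∀ s ∈ S, ∀ s' ∈ S, ∀ xa x', |p s xa x' - p s' xa x'| ≤ Lp * ‖s - s'‖)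
    (Q : E → X × A → ℝ)
    (hQfix : ∀ s ∈ S, bellmanOp (r s) (p s) α (Q s) = Q s)
    (C0 : ℝ) (hC0 : ∀ a ∈ S, ∀ b ∈ S, ‖a - b‖ ≤ C0)
    (sstar s' : E) (hsstar : sstar ∈ S) (hs' : s' ∈ S)
    (N : ℕ) (hN : 1 ≤ N)
    (hstilde : ((((N : ℝ) - 1) / N) • sstar + ((1 : ℝ) / N) • s') ∈ S) :
    supNorm (fun xa =>
        Q ((((N : ℝ) - 1) / N) • sstar + ((1 : ℝ) / N) • s') xa - Q sstar xa) ≤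
      C0 * ((1 - α) * Lr + α * Rmax * (Fintype.card X) * Lp) / (1 - α) ^ 2 / N := by
  have hd : ‖(((N : ℝ) - 1) / N) • sstar + ((1 : ℝ) / N) • s' - sstar‖ ≤ C0 / N := by
    rw [norm_smul_add_smul_sub_left _ _ (Nat.cast_pos.2 hN)]
    gcongr
    exact hC0 s' hs' sstar hsstar
  set st := (((N : ℝ) - 1) / N) • sstar + ((1 : ℝ) / N) • s'
  set d := ‖st - sstar‖
  set K := ((1 - α) * Lr + α * Rmax * (Fintype.card X) * Lp) / (1 - α) ^ 2
  have h1α : 0 < 1 - α := sub_pos.2 hα1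
  have hK : 0 ≤ K := div_nonneg (add_nonneg (mul_nonneg h1α.le hLr0) (by positivity)) (sq_nonneg _)
  have hQstar := norm_le_of_bellmanOp_eq hα0 hα1 (hp0 sstar hsstar) (hp1 sstar hsstar)
    (hR sstar hsstar) (hQfix sstar hsstar)
  have hpert := norm_sub_le_of_bellmanOp_eq hα0 hα1 (hp0 st hstilde) (hp1 st hstilde)
    (hLr st hstilde sstar hsstar) (hLp st hstilde sstar hsstar) (hQfix st hstilde)
    (hQfix sstar hsstar)
  calc supNorm (Q st - Q sstar) = ‖Q st - Q sstar‖ := supNorm_eq_norm _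
    _ ≤ (Lr * d + α * (Fintype.card X * (Lp * d) * ‖Q sstar‖)) / (1 - α) := hpert
    _ ≤ (Lr * d + α * (Fintype.card X * (Lp * d) * (Rmax / (1 - α)))) / (1 - α) := by gcongr
    _ = K * d := by simp only [K]; field_simp
    _ ≤ K * (C0 / N) := by gcongr
    _ = C0 * ((1 - α) * Lr + α * Rmax * (Fintype.card X) * Lp) / (1 - α) ^ 2 / N := by
      simp only [K]; ring

/-- Under assumptions (i)–(iii), with diameter of `S` bounded by `C0`:
for every `s*, s' ∈ S` and integer `N ≥ 1` such that `s̃ = ((N−1)/N) • s* + (1/N) • s'`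
lies in `S`, one has `‖Q_{s̃} − Q_{s*}‖∞ ≤ C_MF / N`, where
`C_MF = C0 * ((1 − α) L_r + α R_max |X| L_p) / (1 − α)²`. -/
theorem mean_field_perturbation_q_bound
    {X A : Type*} [Fintype X] [Fintype A] [Nonempty X] [Nonempty A]
    {E : Type*} [NormedAddCommGroup E] [NormedSpace ℝ E]
    (S : Set E) (hS : S.Nonempty)
    (α : ℝ) (hα0 : 0 ≤ α) (hα1 : α < 1)
    (r : E → X × A → ℝ) (p : E → X × A → X → ℝ)
    (hp0 : ∀ s ∈ S, ∀ xa x', 0 ≤ p s xa x')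
    (hp1 : ∀ s ∈ S, ∀ xa, ∑ x' : X, p s xa x' = 1)
    (Rmax : ℝ) (hRmax : 0 ≤ Rmax)
    (hR : ∀ s ∈ S, ∀ xa : X × A, |r s xa| ≤ Rmax)
    (Lr : ℝ) (hLr0 : 0 ≤ Lr)
    (hLr : ∀ s ∈ S, ∀ s' ∈ S, ∀ xa : X × A, |r s xa - r s' xa| ≤ Lr * ‖s - s'‖)
    (Lp : ℝ) (hLp0 : 0 ≤ Lp)
    (hLp : ∀ s ∈ S, ∀ s' ∈ S, ∀ xa x', |p s xa x' - p s' xa x'| ≤ Lp * ‖s - s'‖)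
    (Q : E → X × A → ℝ)
    (hQfix : ∀ s ∈ S, bellmanOp (r s) (p s) α (Q s) = Q s)
    (C0 : ℝ) (hC0 : ∀ a ∈ S, ∀ b ∈ S, ‖a - b‖ ≤ C0)
    (sstar s' : E) (hsstar : sstar ∈ S) (hs' : s' ∈ S)
    (N : ℕ) (hN : 1 ≤ N)
    (hstilde : ((((N : ℝ) - 1) / N) • sstar + ((1 : ℝ) / N) • s') ∈ S) :
    supNorm (fun xa =>
        Q ((((N : ℝ) - 1) / N) • sstar + ((1 : ℝ) / N) • s') xa - Q sstar xa) ≤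
      C0 * ((1 - α) * Lr + α * Rmax * (Fintype.card X) * Lp) / (1 - α) ^ 2 / N :=
  mean_field_perturbation_q_bound_general S α hα0 hα1 r p hp0 hp1 Rmax hRmax hR Lr hLr0 hLr Lp hLp0
    hLp Q hQfix C0 hC0 sstar s' hsstar hs' N hN hstilde
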